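/- Let ℒ and C be N×N real matrices satisfying C² = I and C ℒ C = 2I − ℒ. Let h⁰, h¹, g⁰, g¹ be real polynomials satisfying, as polynomial identities, g⁰(X)·h⁰(X) + g¹(X)·h¹(X) = 2 and g⁰(X)·h⁰(2 − X) − g¹(X)·h¹(2 − X) = 0, where h(2 − X) denotes the composition of h with the polynomial 2 − X. Then the two-channel filter bank achieves perfect reconstruction: ½ g⁰(ℒ)(I − C) h⁰(ℒ) + ½ g¹(ℒ)(I + C) h¹(ℒ) = I. -/

import Mathlib

/-!
Spectral folding `C ℒ C = 2 − ℒ` with `C² = 1` says that `C` intertwines `p(ℒ)` with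
`p(2 − ℒ)`: `C p(ℒ) = p(2 − ℒ) C` for every polynomial `p`. Moving `C` to the right in
`g⁰(ℒ)(1 − C)h⁰(ℒ) + g¹(ℒ)(1 + C)h¹(ℒ)` therefore splits it into the distortion term
`(g⁰h⁰ + g¹h¹)(ℒ) = 2` minus the aliasing term `(g⁰ h⁰(2 − X) − g¹ h¹(2 − X))(ℒ) C = 0`.
-/

open Matrix Polynomial

theorem SemiconjBy.aeval {R A : Type*} [CommSemiring R] [Semiring A] [Algebra R A]
    {c x y : A} (h : SemiconjBy c x y) (p : R[X]) :
    SemiconjBy c (aeval x p) (aeval y p) := by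
  induction p using Polynomial.induction_on' with
  | add p q hp hq => simpa only [map_add] using hp.add_right hq
  | monomial n a =>
    simp only [aeval_monomial]
    exact SemiconjBy.mul_right (Algebra.commute_algebraMap_right a c) (h.pow_right n)

theorem semiconjBy_mul_mul_self {M : Type*} [Monoid M] {c : M} (hc : c * c = 1) (x : M) :
    SemiconjBy c x (c * x * c) := by
  rw [SemiconjBy, mul_assoc (c * x), hc, mul_one]

theorem mul_aeval_eq_aeval_comp_two_sub_mul {R A : Type*} [CommRing R] [Ring A] [Algebra R A]
    {L C : A} (hC : C * C = 1) (hfold : C * L * C = 2 • 1 - L) (p : R[X]) :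
    C * aeval L p = aeval L (p.comp (2 - X)) * C := by
  have hL : aeval L (2 - X : R[X]) = C * L * C := by
    rw [hfold, map_sub, aeval_X, map_ofNat, two_nsmul, one_add_one_eq_two]
  rw [aeval_comp, hL]
  exact (semiconjBy_mul_mul_self hC L).aeval p

theorem two_channel_sum_eq_two {A : Type*} [Ring A] {c g₀ g₁ h₀ h₁ h₀' h₁' : A}
    (hc₀ : c * h₀ = h₀' * c) (hc₁ : c * h₁ = h₁' * c)
    (hpr : g₀ * h₀ + g₁ * h₁ = 2) (haa : g₀ * h₀' - g₁ * h₁' = 0) :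
    g₀ * (1 - c) * h₀ + g₁ * (1 + c) * h₁ = 2 := by
  calc g₀ * (1 - c) * h₀ + g₁ * (1 + c) * h₁
      = (g₀ * h₀ + g₁ * h₁) - g₀ * (c * h₀) + g₁ * (c * h₁) := by noncomm_ring
    _ = (g₀ * h₀ + g₁ * h₁) - (g₀ * h₀' - g₁ * h₁') * c := by rw [hc₀, hc₁]; noncomm_ring
    _ = 2 := by rw [hpr, haa, zero_mul, sub_zero]

/-- Perfect reconstruction of a two-channel graph filter bank on a bipartite graph:
if `C² = I`, the spectral folding identity `C ℒ C = 2I − ℒ` holds, and the analysis and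
synthesis kernels satisfy `g⁰ h⁰ + g¹ h¹ = 2` and
`g⁰(X) h⁰(2 − X) − g¹(X) h¹(2 − X) = 0` as polynomial identities, then
`½ g⁰(ℒ)(I − C) h⁰(ℒ) + ½ g¹(ℒ)(I + C) h¹(ℒ) = I`. -/
theorem two_channel_filter_bank_perfect_reconstruction
    {N : ℕ}
    (L C : Matrix (Fin N) (Fin N) ℝ)
    (hC : C * C = 1)
    (hfold : C * L * C = 2 • (1 : Matrix (Fin N) (Fin N) ℝ) - L)
    (h0 h1 g0 g1 : Polynomial ℝ)
    (hpr : g0 * h0 + g1 * h1 = 2)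
    (haa : g0 * (h0.comp (2 - Polynomial.X)) - g1 * (h1.comp (2 - Polynomial.X)) = 0) :
    (1 / 2 : ℝ) • (Polynomial.aeval L g0 * (1 - C) * Polynomial.aeval L h0) +
      (1 / 2 : ℝ) • (Polynomial.aeval L g1 * (1 + C) * Polynomial.aeval L h1) = 1 := by
  have hsum := two_channel_sum_eq_two
    (mul_aeval_eq_aeval_comp_two_sub_mul hC hfold h0)
    (mul_aeval_eq_aeval_comp_two_sub_mul hC hfold h1)
    (by rw [← map_mul, ← map_mul, ← map_add, hpr, map_ofNat])
    (by rw [← map_mul, ← map_mul, ← map_sub, haa, map_zero])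
  rw [← smul_add, hsum, Algebra.smul_def, ← map_ofNat (algebraMap ℝ (Matrix (Fin N) (Fin N) ℝ)) 2,
    ← map_mul]
  norm_num
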